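/- The QPE order preserves the convex structure of state space: for density matrices ρ, σ on M_n(ℂ), ρ ⊑ σ if and only if for all t ∈ [0,1] it holds that ρ ⊑ (1−t)•ρ + t•σ and (1−t)•ρ + t•σ ⊑ σ. -/

import Mathlib

open Matrix
open scoped ComplexOrder

/-- The largest eigenvalue of a matrix (for a positive semidefinite matrix this
equals the operator norm). -/
noncomputable def maxEig {m : Type*} [Fintype m] (A : Matrix m m ℂ) : ℝ :=
  sSup {a : ℝ | ∃ v : m → ℂ, v ≠ 0 ∧ A.mulVec v = (a : ℂ) • v}

/-- A density matrix: positive semidefinite with trace 1. -/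
def IsDensity {m : Type*} [Fintype m] (ρ : Matrix m m ℂ) : Prop :=
  ρ.PosSemidef ∧ ρ.trace = 1

/-- The quantum positive evidence (QPE) order: ρ ⊑ σ iff σ⁺•ρ - ρ⁺•σ ≥ 0. -/
def QPE {m : Type*} [Fintype m] (ρ σ : Matrix m m ℂ) : Prop :=
  (maxEig σ • ρ - maxEig ρ • σ).PosSemidef

namespace QPEAux

variable {n : ℕ}

lemma real_smul_matrix (r : ℝ) (A : Matrix (Fin n) (Fin n) ℂ) : r • A = (r : ℂ) • A := by
  ext i j; simp [Complex.real_smul]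

/-- The eigenvalue set of a Hermitian matrix equals the range of `eigenvalues`. -/
lemma eigSet_eq {A : Matrix (Fin n) (Fin n) ℂ} (hA : A.IsHermitian) :
    {a : ℝ | ∃ v : Fin n → ℂ, v ≠ 0 ∧ A.mulVec v = (a : ℂ) • v} = Set.range hA.eigenvalues := by
  ext a
  simp only [Set.mem_setOf_eq, Set.mem_range]
  constructor
  · rintro ⟨v, hv, hAv⟩
    set U : Matrix (Fin n) (Fin n) ℂ := ↑hA.eigenvectorUnitary with hUdef
    have hU1 : U * star U = 1 := mem_unitaryGroup_iff.mp hA.eigenvectorUnitary.2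
    have hU2 : star U * U = 1 := mem_unitaryGroup_iff'.mp hA.eigenvectorUnitary.2
    set w : Fin n → ℂ := (star U) *ᵥ v with hwdef
    have hUw : U *ᵥ w = v := by
      rw [hwdef, mulVec_mulVec, hU1, one_mulVec]
    have hw : w ≠ 0 := by
      intro h0
      rw [h0, mulVec_zero] at hUw
      exact hv hUw.symm
    have hspec : A = U * diagonal (RCLike.ofReal ∘ hA.eigenvalues) * star U := by
      rw [hUdef]; exact hA.spectral_theorem
    have hDw : diagonal (RCLike.ofReal ∘ hA.eigenvalues) *ᵥ w = (a : ℂ) • w := by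
      have hDU : diagonal (RCLike.ofReal ∘ hA.eigenvalues) * star U = star U * A := by
        calc diagonal (RCLike.ofReal ∘ hA.eigenvalues) * star U
            = (star U * U) * diagonal (RCLike.ofReal ∘ hA.eigenvalues) * star U := by
              rw [hU2, one_mul]
          _ = star U * (U * diagonal (RCLike.ofReal ∘ hA.eigenvalues) * star U) := by
              simp only [mul_assoc]
          _ = star U * A := by rw [← hspec]
      calc diagonal (RCLike.ofReal ∘ hA.eigenvalues) *ᵥ w
          = (diagonal (RCLike.ofReal ∘ hA.eigenvalues) * star U) *ᵥ v := by
            rw [hwdef, mulVec_mulVec]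
        _ = (star U) *ᵥ (A *ᵥ v) := by rw [hDU, ← mulVec_mulVec]
        _ = (a : ℂ) • w := by rw [hAv, mulVec_smul, hwdef]
    obtain ⟨i, hi⟩ := Function.ne_iff.mp hw
    refine ⟨i, ?_⟩
    have := congrFun hDw i
    simp only [mulVec_diagonal, Function.comp_apply, Pi.smul_apply, smul_eq_mul] at this
    have hcoe : (hA.eigenvalues i : ℂ) = (a : ℂ) := mul_right_cancel₀ hi this
    exact_mod_cast hcoe
  · rintro ⟨i, rfl⟩
    refine ⟨⇑(hA.eigenvectorBasis i), ?_, ?_⟩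
    · intro h0
      exact hA.eigenvectorBasis.orthonormal.ne_zero i (by ext j; exact congrFun h0 j)
    · rw [hA.mulVec_eigenvectorBasis i]
      ext j
      simp [Complex.real_smul]

lemma maxEig_eq {A : Matrix (Fin n) (Fin n) ℂ} (hA : A.IsHermitian) :
    maxEig A = sSup (Set.range hA.eigenvalues) := by
  rw [maxEig, eigSet_eq hA]

lemma eig_le_maxEig {A : Matrix (Fin n) (Fin n) ℂ} (hA : A.IsHermitian) (i : Fin n) :
    hA.eigenvalues i ≤ maxEig A := by
  rw [maxEig_eq hA]
  exact le_csSup (Set.finite_range _).bddAbove ⟨i, rfl⟩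

lemma maxEig_mem {A : Matrix (Fin n) (Fin n) ℂ} (hA : A.IsHermitian) (hn : 0 < n) :
    ∃ i, hA.eigenvalues i = maxEig A := by
  have h : maxEig A ∈ Set.range hA.eigenvalues := by
    rw [maxEig_eq hA]
    exact Set.Nonempty.csSup_mem ⟨_, ⟨(⟨0, hn⟩ : Fin n), rfl⟩⟩ (Set.finite_range _)
  exact h

lemma exists_maxEig_vec {A : Matrix (Fin n) (Fin n) ℂ} (hA : A.IsHermitian) (hn : 0 < n) :
    ∃ v : Fin n → ℂ, v ≠ 0 ∧ A *ᵥ v = (maxEig A : ℂ) • v := by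
  have h : maxEig A ∈ {a : ℝ | ∃ v : Fin n → ℂ, v ≠ 0 ∧ A.mulVec v = (a : ℂ) • v} := by
    rw [eigSet_eq hA]
    rw [maxEig_eq hA]
    exact Set.Nonempty.csSup_mem ⟨_, ⟨(⟨0, hn⟩ : Fin n), rfl⟩⟩ (Set.finite_range _)
  exact h

/-- `maxEig A • 1 - A` is positive semidefinite for Hermitian `A` (n > 0). -/
lemma shift_posSemidef {A : Matrix (Fin n) (Fin n) ℂ} (hA : A.IsHermitian) :
    ((maxEig A : ℂ) • (1 : Matrix (Fin n) (Fin n) ℂ) - A).PosSemidef := by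
  set U : Matrix (Fin n) (Fin n) ℂ := ↑hA.eigenvectorUnitary with hUdef
  have hU1 : U * star U = 1 := mem_unitaryGroup_iff.mp hA.eigenvectorUnitary.2
  have hspec : A = U * diagonal (RCLike.ofReal ∘ hA.eigenvalues) * star U := by
    rw [hUdef]; exact hA.spectral_theorem
  have key : (maxEig A : ℂ) • (1 : Matrix (Fin n) (Fin n) ℂ) - A
      = U * diagonal (fun i => ((maxEig A - hA.eigenvalues i : ℝ) : ℂ)) * Uᴴ := by
    have hdiag : diagonal (fun i => ((maxEig A - hA.eigenvalues i : ℝ) : ℂ))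
        = (maxEig A : ℂ) • (1 : Matrix (Fin n) (Fin n) ℂ)
          - diagonal (RCLike.ofReal ∘ hA.eigenvalues) := by
      ext i j
      by_cases h : i = j <;> simp [h, diagonal, Complex.ofReal_sub]
    rw [hdiag, mul_sub, sub_mul, Matrix.mul_smul, mul_one, Matrix.smul_mul,
      ← Matrix.star_eq_conjTranspose, hU1, ← hspec]
  rw [key]
  refine (Matrix.PosSemidef.diagonal ?_).mul_mul_conjTranspose_same U
  intro i
  simp only [Pi.zero_apply]
  rw [Complex.zero_le_real, sub_nonneg]
  exact eig_le_maxEig hA i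

lemma posSemidef_real_smul {A : Matrix (Fin n) (Fin n) ℂ} (hA : A.PosSemidef)
    {r : ℝ} (hr : 0 ≤ r) : ((r : ℂ) • A).PosSemidef := by
  rw [posSemidef_iff_dotProduct_mulVec]
  constructor
  · rw [IsHermitian, conjTranspose_smul, hA.1.eq]
    congr 1
    simp [Complex.star_def, Complex.conj_ofReal]
  · intro x
    rw [smul_mulVec, dotProduct_smul, smul_eq_mul]
    exact mul_nonneg (Complex.zero_le_real.mpr hr) (hA.dotProduct_mulVec_nonneg x)

/-- From `0 ≤ (x : ℂ) * (star w ⬝ᵥ w)` with `w ≠ 0` deduce `0 ≤ x`. -/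
lemma nonneg_of_mul_dot {x : ℝ} {w : Fin n → ℂ} (hw : w ≠ 0)
    (h : 0 ≤ (x : ℂ) * (star w ⬝ᵥ w)) : 0 ≤ x := by
  have hd : 0 < star w ⬝ᵥ w := dotProduct_star_self_pos_iff.mpr hw
  rw [Complex.lt_def] at hd
  rw [Complex.le_def] at h
  simp only [Complex.zero_re, Complex.zero_im, Complex.mul_re, Complex.ofReal_re,
    Complex.ofReal_im, zero_mul, sub_zero] at h hd
  nlinarith [h.1, hd.1]

lemma trace_eq_sum_eigenvalues {A : Matrix (Fin n) (Fin n) ℂ} (hA : A.IsHermitian) :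
    A.trace = ∑ i, (hA.eigenvalues i : ℂ) := by
  set U : Matrix (Fin n) (Fin n) ℂ := ↑hA.eigenvectorUnitary with hUdef
  have hU2 : star U * U = 1 := mem_unitaryGroup_iff'.mp hA.eigenvectorUnitary.2
  calc A.trace = (U * diagonal (RCLike.ofReal ∘ hA.eigenvalues) * star U).trace := by
        exact congrArg trace hA.spectral_theorem
    _ = (star U * U * diagonal (RCLike.ofReal ∘ hA.eigenvalues)).trace := by
        rw [trace_mul_cycle]
    _ = (diagonal (RCLike.ofReal ∘ hA.eigenvalues)).trace := by rw [hU2, one_mul]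
    _ = ∑ i, (hA.eigenvalues i : ℂ) := by rw [trace_diagonal]; rfl

lemma card_pos_of_density {A : Matrix (Fin n) (Fin n) ℂ} (hA : IsDensity A) : 0 < n := by
  rcases Nat.eq_zero_or_pos n with h | h
  · exfalso
    have : A.trace = 0 := by
      subst h
      simp [Matrix.trace]
    rw [hA.2] at this
    exact one_ne_zero this
  · exact h

lemma maxEig_pos {A : Matrix (Fin n) (Fin n) ℂ} (hA : IsDensity A) : 0 < maxEig A := by
  have hn : 0 < n := card_pos_of_density hA
  have htr : (1 : ℂ) = ∑ i, (hA.1.1.eigenvalues i : ℂ) := by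
    rw [← trace_eq_sum_eigenvalues hA.1.1, hA.2]
  have htr' : (1 : ℝ) = ∑ i, hA.1.1.eigenvalues i := by
    have : ((1 : ℝ) : ℂ) = ((∑ i, hA.1.1.eigenvalues i : ℝ) : ℂ) := by
      push_cast
      exact htr
    exact_mod_cast this
  have hle : ∑ i, hA.1.1.eigenvalues i ≤ ∑ _i : Fin n, maxEig A :=
    Finset.sum_le_sum fun i _ => eig_le_maxEig hA.1.1 i
  rw [Finset.sum_const, Finset.card_univ, Fintype.card_fin, nsmul_eq_mul] at hle
  by_contra hx
  push_neg at hx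
  have : (n : ℝ) * maxEig A ≤ 0 :=
    mul_nonpos_of_nonneg_of_nonpos (Nat.cast_nonneg n) hx
  linarith [htr' ▸ hle]

end QPEAux

open QPEAux

theorem stmt8 {n : ℕ} (ρ σ : Matrix (Fin n) (Fin n) ℂ)
    (hρ : IsDensity ρ) (hσ : IsDensity σ) :
    QPE ρ σ ↔ ∀ t ∈ Set.Icc (0 : ℝ) 1,
      QPE ρ ((1 - t) • ρ + t • σ) ∧ QPE ((1 - t) • ρ + t • σ) σ := by
  constructor
  · intro h t ht
    obtain ⟨ht0, ht1⟩ := ht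
    have hn : 0 < n := card_pos_of_density hρ
    set c := maxEig ρ with hc
    set s := maxEig σ with hs
    have hcpos : 0 < c := maxEig_pos hρ
    have hspos : 0 < s := maxEig_pos hσ
    -- h as a complex-smul PSD matrix
    have hB : ((s : ℂ) • ρ - (c : ℂ) • σ).PosSemidef := by
      have := h
      rw [QPE, real_smul_matrix, real_smul_matrix] at this
      exact this
    -- top eigenvector of σ
    obtain ⟨v, hv, hσv⟩ := exists_maxEig_vec hσ.1.1 hn
    rw [← hs] at hσv
    -- v is also a top eigenvector of ρ
    have hCpsd := shift_posSemidef (A := ρ) hρ.1.1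
    have hρv : ρ *ᵥ v = (c : ℂ) • v := by
      set C : Matrix (Fin n) (Fin n) ℂ := (c : ℂ) • 1 - ρ with hCdef
      have e1 : C *ᵥ v = (c : ℂ) • v - ρ *ᵥ v := by
        rw [hCdef, sub_mulVec, smul_mulVec, one_mulVec]
      have e2 : ((s : ℂ) • ρ - (c : ℂ) • σ) *ᵥ v
          = (s : ℂ) • (ρ *ᵥ v) - ((c : ℂ) * (s : ℂ)) • v := by
        rw [sub_mulVec, smul_mulVec, smul_mulVec, hσv, smul_smul]
      have hCv : ((s : ℂ) • C) *ᵥ v = -(((s : ℂ) • ρ - (c : ℂ) • σ) *ᵥ v) := by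
        rw [smul_mulVec, e1, e2, smul_sub, smul_smul]
        module
      have h1 : 0 ≤ star v ⬝ᵥ ((s : ℂ) • C) *ᵥ v :=
        (posSemidef_real_smul hCpsd hspos.le).dotProduct_mulVec_nonneg v
      have h2 : 0 ≤ star v ⬝ᵥ ((s : ℂ) • ρ - (c : ℂ) • σ) *ᵥ v := hB.dotProduct_mulVec_nonneg v
      have h3 : star v ⬝ᵥ ((s : ℂ) • C) *ᵥ v = 0 := by
        have hle : star v ⬝ᵥ ((s : ℂ) • C) *ᵥ v ≤ 0 := by
          rw [hCv, dotProduct_neg]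
          exact neg_nonpos.mpr h2
        exact le_antisymm hle h1
      have h4 : ((s : ℂ) • C) *ᵥ v = 0 :=
        ((posSemidef_real_smul hCpsd hspos.le).dotProduct_mulVec_zero_iff v).mp h3
      have h5 : C *ᵥ v = 0 := by
        rw [smul_mulVec] at h4
        have := smul_eq_zero.mp h4
        rcases this with h' | h'
        · exact absurd (Complex.ofReal_eq_zero.mp h') hspos.ne'
        · exact h'
      rw [hCdef, sub_mulVec, smul_mulVec, one_mulVec, sub_eq_zero] at h5
      exact h5.symm
    -- the convex combination
    set τ : Matrix (Fin n) (Fin n) ℂ := (1 - t) • ρ + t • σ with hτdef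
    have hτc : τ = ((1 - t : ℝ) : ℂ) • ρ + ((t : ℝ) : ℂ) • σ := by
      rw [hτdef, real_smul_matrix, real_smul_matrix]
    have hτpsd : τ.PosSemidef := by
      rw [hτc]
      exact (posSemidef_real_smul hρ.1 (by linarith)).add (posSemidef_real_smul hσ.1 ht0)
    set b : ℝ := (1 - t) * c + t * s with hb
    -- τ *ᵥ v = b • v
    have hτv : τ *ᵥ v = (b : ℂ) • v := by
      rw [hτc, add_mulVec, smul_mulVec, smul_mulVec, hρv, hσv, smul_smul, smul_smul,
        ← add_smul, hb]
      congr 1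
      push_cast
      ring
    have hbmem : b ∈ {a : ℝ | ∃ w : Fin n → ℂ, w ≠ 0 ∧ τ.mulVec w = (a : ℂ) • w} :=
      ⟨v, hv, hτv⟩
    -- upper bound: every eigenvalue of τ is ≤ b
    have hM : ((b : ℂ) • (1 : Matrix (Fin n) (Fin n) ℂ) - τ).PosSemidef := by
      have hexpr : (b : ℂ) • (1 : Matrix (Fin n) (Fin n) ℂ) - τ
          = ((1 - t : ℝ) : ℂ) • ((c : ℂ) • 1 - ρ) + ((t : ℝ) : ℂ) • ((s : ℂ) • 1 - σ) := by
        rw [hτc, hb]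
        have hcoef : ((((1 - t) * c + t * s : ℝ)) : ℂ)
            = ((1 - t : ℝ) : ℂ) * (c : ℂ) + ((t : ℝ) : ℂ) * (s : ℂ) := by push_cast; ring
        rw [hcoef]
        module
      rw [hexpr]
      exact (posSemidef_real_smul hCpsd (by linarith)).add
        (posSemidef_real_smul (shift_posSemidef hσ.1.1) ht0)
    have hub : ∀ a ∈ {a : ℝ | ∃ w : Fin n → ℂ, w ≠ 0 ∧ τ.mulVec w = (a : ℂ) • w}, a ≤ b := by
      rintro a ⟨w, hw, hτw⟩
      have h0 : 0 ≤ star w ⬝ᵥ ((b : ℂ) • (1 : Matrix (Fin n) (Fin n) ℂ) - τ) *ᵥ w := hM.dotProduct_mulVec_nonneg w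
      have hMw : ((b : ℂ) • (1 : Matrix (Fin n) (Fin n) ℂ) - τ) *ᵥ w = ((b - a : ℝ) : ℂ) • w := by
        rw [sub_mulVec, smul_mulVec, one_mulVec, hτw]
        rw [← sub_smul]
        congr 1
        push_cast
        ring
      rw [hMw, dotProduct_smul, smul_eq_mul] at h0
      have := nonneg_of_mul_dot hw h0
      linarith
    -- maxEig τ = b
    have hmaxτ : maxEig τ = b := by
      apply le_antisymm
      · exact csSup_le ⟨b, hbmem⟩ hub
      · exact le_csSup ⟨b, hub⟩ hbmem
    constructor
    · -- QPE ρ τ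
      rw [QPE, hmaxτ, real_smul_matrix, real_smul_matrix]
      have hexpr : (b : ℂ) • ρ - (c : ℂ) • τ = ((t : ℝ) : ℂ) • ((s : ℂ) • ρ - (c : ℂ) • σ) := by
        rw [hτc, hb]
        have hcoef : ((((1 - t) * c + t * s : ℝ)) : ℂ)
            = ((1 - t : ℝ) : ℂ) * (c : ℂ) + ((t : ℝ) : ℂ) * (s : ℂ) := by push_cast; ring
        rw [hcoef]
        module
      rw [hexpr]
      exact posSemidef_real_smul hB ht0
    · -- QPE τ σ
      rw [QPE, hmaxτ, real_smul_matrix, real_smul_matrix]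
      have hexpr : (s : ℂ) • τ - (b : ℂ) • σ
          = ((1 - t : ℝ) : ℂ) • ((s : ℂ) • ρ - (c : ℂ) • σ) := by
        rw [hτc, hb]
        have hcoef : ((((1 - t) * c + t * s : ℝ)) : ℂ)
            = ((1 - t : ℝ) : ℂ) * (c : ℂ) + ((t : ℝ) : ℂ) * (s : ℂ) := by push_cast; ring
        rw [hcoef]
        module
      rw [hexpr]
      exact posSemidef_real_smul hB (by linarith)
  · intro h
    have := (h 1 ⟨zero_le_one, le_refl 1⟩).1
    simpa using this
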